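/- arXiv:2106.05396 — 4 statements merged into one kernel-verified Lean document; each statement's English description precedes it below -/
import Mathlib

section
/- There exists a real n×(n−p) matrix W satisfying: (i) WᵀW = I_{n−p}, (ii) FᵀW = 0 (the p×(n−p) zero matrix), and (iii) K̄ = W(WᵀKW)⁻¹Wᵀ, where WᵀKW is positive definite, hence invertible. -/
/-!
Take for `W` an orthonormal basis of `ker Fᵀ`, which has dimension `n - p`. Both `K̄` and
`W(WᵀKW)⁻¹Wᵀ` kill the columns of `F` and send `KW` to `W`. The columns of `F` and of `KW`
together form a basis of `ℝⁿ` (apply `Wᵀ` to a vanishing combination), so the two matrices agree.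
-/

open Matrix

/-- The matrix `K̄ = K⁻¹ − K⁻¹F(FᵀK⁻¹F)⁻¹FᵀK⁻¹`. -/
noncomputable def Kbar {n p : ℕ} (F : Matrix (Fin n) (Fin p) ℝ)
    (K : Matrix (Fin n) (Fin n) ℝ) : Matrix (Fin n) (Fin n) ℝ :=
  K⁻¹ - K⁻¹ * F * (Fᵀ * K⁻¹ * F)⁻¹ * Fᵀ * K⁻¹

namespace Matrix

variable {m k l ι K : Type*} [Fintype m] [Fintype k] [Fintype l] [Field K]

omit [Fintype m] in
theorem mulVec_injective_of_rank_eq_card {F : Matrix m k K} (h : F.rank = Fintype.card k) :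
    Function.Injective F.mulVec := by
  rw [mulVec_injective_iff, linearIndependent_iff_card_eq_finrank_span, Set.finrank,
    ← rank_eq_finrank_span_cols, h]

theorem mulVec_fromCols_injective {F : Matrix m k K} {G : Matrix m l K} {H : Matrix ι m K}
    (hHF : H * F = 0) (hF : Function.Injective F.mulVec)
    (hHG : Function.Injective (H * G).mulVec) :
    Function.Injective (fromCols F G).mulVec := by
  rw [← coe_mulVecLin, injective_iff_map_eq_zero]
  intro v hv
  rw [mulVecLin_apply, fromCols_mulVec] at hv
  have hr : v ∘ Sum.inr = 0 := by
    have := congrArg (H *ᵥ ·) hv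
    simp only [mulVec_add, mulVec_mulVec, hHF, zero_mulVec, zero_add, mulVec_zero] at this
    exact hHG.eq_iff' (mulVec_zero _) |>.mp this
  have hl : v ∘ Sum.inl = 0 := by
    rw [hr, mulVec_zero, add_zero] at hv
    exact hF.eq_iff' (mulVec_zero _) |>.mp hv
  ext (i | i)
  · exact congrFun hl i
  · exact congrFun hr i

theorem eq_of_mul_eq_mul_of_mulVec_injective {A B : Matrix m m K} {M : Matrix m k K}
    (hM : Function.Injective M.mulVec) (hcard : Fintype.card k = Fintype.card m)
    (h : A * M = B * M) : A = B := by
  classical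
  have hsurj : Function.Surjective (toLin' M) :=
    (LinearMap.injective_iff_surjective_of_finrank_eq_finrank (by simp [hcard])).mp hM
  apply toLin'.injective
  rw [← LinearMap.cancel_right hsurj, ← toLin'_mul, ← toLin'_mul, h]

theorem mulVec_injective_of_transpose_mul_self_eq_one [DecidableEq k] {W : Matrix m k K}
    (hW : Wᵀ * W = 1) :
    Function.Injective W.mulVec := fun x y hxy => by
  simpa [mulVec_mulVec, hW] using congrArg (Wᵀ *ᵥ ·) hxy

theorem PosDef.transpose_mul_mul_same {A : Matrix m m ℝ} {B : Matrix m k ℝ} (hA : A.PosDef)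
    (hB : Function.Injective B.mulVec) : (Bᵀ * A * B).PosDef := by
  simpa using hA.conjTranspose_mul_mul_same hB

theorem exists_orthonormal_cols_transpose_mul_eq_zero (F : Matrix m k ℝ) {r : ℕ}
    (hr : F.rank + r = Fintype.card m) :
    ∃ W : Matrix m (Fin r) ℝ, Wᵀ * W = 1 ∧ Fᵀ * W = 0 := by
  set f := Fᵀ.mulVecLin ∘ₗ (WithLp.linearEquiv 2 ℝ (m → ℝ)).toLinearMap
  have hker : Module.finrank ℝ (LinearMap.ker f) = r := by
    have := LinearMap.finrank_range_add_finrank_ker f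
    rw [LinearMap.range_comp_of_range_eq_top _ (LinearEquiv.range _), ← rank, rank_transpose,
      finrank_euclideanSpace] at this
    omega
  let b := (stdOrthonormalBasis ℝ (LinearMap.ker f)).reindex (finCongr hker)
  let v : Fin r → EuclideanSpace ℝ m := fun j => b j
  refine ⟨of fun i j => v j i, ?_, ?_⟩
  · have hv : Orthonormal ℝ v := b.orthonormal.comp_linearIsometry (LinearMap.ker f).subtypeₗᵢ
    rw [← gram_eq_one_iff_orthonormal, gram_eq_conjTranspose_mul (EuclideanSpace.basisFun m ℝ)]
      at hv
    exact hv
  · ext a j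
    have : f (v j) = 0 := (b j).2
    simpa [f, mul_apply, vecMul, dotProduct, mul_comm] using congrFun this a

end Matrix

section Kbar

variable {n p q : ℕ} {F : Matrix (Fin n) (Fin p) ℝ} {K : Matrix (Fin n) (Fin n) ℝ}

theorem Kbar_mul_self (hG : IsUnit (Fᵀ * K⁻¹ * F).det) : Kbar F K * F = 0 := by
  rw [Kbar, Matrix.sub_mul, Matrix.mul_assoc _ Fᵀ, Matrix.mul_assoc _ (Fᵀ * K⁻¹),
    Matrix.mul_assoc _ _ (Fᵀ * K⁻¹ * F), nonsing_inv_mul _ hG, Matrix.mul_one, sub_self]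

theorem Kbar_mul_mul_of_transpose_mul_eq_zero {W : Matrix (Fin n) (Fin q) ℝ}
    (hK : IsUnit K.det) (hFW : Fᵀ * W = 0) : Kbar F K * (K * W) = W := by
  have hKW : K⁻¹ * (K * W) = W := by rw [← Matrix.mul_assoc, nonsing_inv_mul _ hK, Matrix.one_mul]
  rw [Kbar, Matrix.sub_mul, Matrix.mul_assoc _ K⁻¹, hKW, Matrix.mul_assoc _ Fᵀ, hFW,
    Matrix.mul_zero, sub_zero]

end Kbar

theorem stmt1_general (n p : ℕ)
    (F : Matrix (Fin n) (Fin p) ℝ) (hF : F.rank = p)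
    (K : Matrix (Fin n) (Fin n) ℝ) (hK : K.PosDef) :
    ∃ W : Matrix (Fin n) (Fin (n - p)) ℝ,
      Wᵀ * W = 1 ∧ Fᵀ * W = 0 ∧ (Wᵀ * K * W).PosDef ∧
      Kbar F K = W * (Wᵀ * K * W)⁻¹ * Wᵀ := by
  have hpn : p ≤ n := hF ▸ F.rank_le_height
  obtain ⟨W, hWW, hFW⟩ :=
    F.exists_orthonormal_cols_transpose_mul_eq_zero (r := n - p) (by simp; omega)
  have hFinj : Function.Injective F.mulVec := mulVec_injective_of_rank_eq_card (by simpa)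
  have hWKW : (Wᵀ * K * W).PosDef :=
    hK.transpose_mul_mul_same (mulVec_injective_of_transpose_mul_self_eq_one hWW)
  have hWF : Wᵀ * F = 0 := by simpa using congrArg transpose hFW
  refine ⟨W, hWW, hFW, hWKW, ?_⟩
  have hbasis : Function.Injective (fromCols F (K * W)).mulVec :=
    mulVec_fromCols_injective hWF hFinj
      (by simpa [Matrix.mul_assoc] using mulVec_injective_of_isUnit hWKW.isUnit)
  have hG : IsUnit (Fᵀ * K⁻¹ * F).det :=
    (isUnit_iff_isUnit_det _).mp (hK.inv.transpose_mul_mul_same hFinj).isUnit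
  have hKbar : Kbar F K * fromCols F (K * W) = fromCols 0 W := by
    rw [mul_fromCols, Kbar_mul_self hG,
      Kbar_mul_mul_of_transpose_mul_eq_zero ((isUnit_iff_isUnit_det _).mp hK.isUnit) hFW]
  have hR : W * (Wᵀ * K * W)⁻¹ * Wᵀ * fromCols F (K * W) = fromCols 0 W := by
    rw [mul_fromCols, Matrix.mul_assoc _ Wᵀ F, hWF, Matrix.mul_zero, Matrix.mul_assoc _ Wᵀ,
      ← Matrix.mul_assoc Wᵀ, Matrix.mul_assoc W,
      nonsing_inv_mul _ ((isUnit_iff_isUnit_det _).mp hWKW.isUnit), Matrix.mul_one]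
  exact eq_of_mul_eq_mul_of_mulVec_injective hbasis (by simp; omega) (hKbar.trans hR.symm)

/-- Lemma 2 (De Oliveira): existence of `W` with `WᵀW = I`, `FᵀW = 0` and
`K̄ = W(WᵀKW)⁻¹Wᵀ`, where `WᵀKW` is positive definite. -/
theorem stmt1 (n p : ℕ) (hp : 0 < p) (hpn : p < n)
    (F : Matrix (Fin n) (Fin p) ℝ) (hF : F.rank = p)
    (K : Matrix (Fin n) (Fin n) ℝ) (hK : K.PosDef) :
    ∃ W : Matrix (Fin n) (Fin (n - p)) ℝ,
      Wᵀ * W = 1 ∧ Fᵀ * W = 0 ∧ (Wᵀ * K * W).PosDef ∧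
      Kbar F K = W * (Wᵀ * K * W)⁻¹ * Wᵀ :=
  stmt1_general n p F hF K hK
end

section
/- Under Hypothesis H2, every diagonal entry of K̄ is strictly positive: K̄ᵢᵢ > 0 for all i = 1,…,n. -/
/-!
`N = 1 - F (FᵀK⁻¹F)⁻¹ FᵀK⁻¹` is the `K⁻¹`-orthogonal projection along `Im F`, and
`K̄ = Nᵀ K⁻¹ N`. Hence `eᵢᵀ K̄ eᵢ = (N eᵢ)ᵀ K⁻¹ (N eᵢ)`, which is positive because
`N eᵢ = eᵢ - F β` cannot vanish when `eᵢ ∉ Im F`.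
-/

open Matrix

theorem Matrix.mulVec_injective_of_rank_eq_card_width {m n K : Type*} [Fintype m] [Fintype n]
    [Field K] {A : Matrix m n K} (hA : A.rank = Fintype.card n) :
    Function.Injective A.mulVec := by
  have hker : Module.finrank K (LinearMap.ker A.mulVecLin) = 0 := by
    have := LinearMap.finrank_range_add_finrank_ker A.mulVecLin
    rw [← Matrix.rank, hA, Module.finrank_fintype_fun_eq_card] at this
    omega
  exact LinearMap.ker_eq_bot.mp (Submodule.finrank_eq_zero.mp hker)

theorem Matrix.sub_mul_inv_mul_eq_transpose_mul_mul {m n R : Type*} [Fintype m] [Fintype n]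
    [DecidableEq m] [DecidableEq n] [CommRing R] {M : Matrix m m R} (F : Matrix m n R)
    (hM : M.IsSymm) (hA : IsUnit (Fᵀ * M * F).det) :
    M - M * F * (Fᵀ * M * F)⁻¹ * Fᵀ * M =
      (1 - F * (Fᵀ * M * F)⁻¹ * Fᵀ * M)ᵀ * M * (1 - F * (Fᵀ * M * F)⁻¹ * Fᵀ * M) := by
  set A := Fᵀ * M * F with hA_def
  have hAsymm : A⁻¹ᵀ = A⁻¹ := by
    rw [transpose_nonsing_inv, hA_def, transpose_mul, transpose_mul, transpose_transpose, hM.eq,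
      Matrix.mul_assoc]
  have hNT : (1 - F * A⁻¹ * Fᵀ * M)ᵀ = 1 - M * F * A⁻¹ * Fᵀ := by
    simp only [transpose_sub, transpose_one, transpose_mul, transpose_transpose, hM.eq, hAsymm,
      Matrix.mul_assoc]
  have hcross : M * F * A⁻¹ * Fᵀ * M * F * A⁻¹ * Fᵀ * M = M * F * A⁻¹ * Fᵀ * M := by
    calc M * F * A⁻¹ * Fᵀ * M * F * A⁻¹ * Fᵀ * M
        = M * F * A⁻¹ * (Fᵀ * M * F) * A⁻¹ * Fᵀ * M := by simp only [Matrix.mul_assoc]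
      _ = M * F * A⁻¹ * Fᵀ * M := by
        rw [← hA_def, Matrix.mul_assoc (M * F) A⁻¹ A, nonsing_inv_mul A hA, Matrix.mul_one]
  rw [hNT]
  simp only [Matrix.mul_sub, Matrix.sub_mul, Matrix.one_mul, Matrix.mul_one, ← Matrix.mul_assoc,
    hcross]
  abel

section GLS

variable {n p : ℕ} (F : Matrix (Fin n) (Fin p) ℝ) (K : Matrix (Fin n) (Fin n) ℝ)

/-- The generalized least-squares residual map `x ↦ x - F β̂(x)`, where
`β̂(x) = (FᵀK⁻¹F)⁻¹FᵀK⁻¹x`. -/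
noncomputable def glsResidual : Matrix (Fin n) (Fin n) ℝ :=
  1 - F * (Fᵀ * K⁻¹ * F)⁻¹ * Fᵀ * K⁻¹

theorem glsResidual_mulVec_ne_zero {x : Fin n → ℝ}
    (hx : x ∉ LinearMap.range F.mulVecLin) : glsResidual F K *ᵥ x ≠ 0 := by
  intro h
  apply hx
  refine ⟨((Fᵀ * K⁻¹ * F)⁻¹ * Fᵀ * K⁻¹) *ᵥ x, ?_⟩
  rw [glsResidual, sub_mulVec, one_mulVec, sub_eq_zero] at h
  simpa only [mulVecLin_apply, mulVec_mulVec, Matrix.mul_assoc] using h.symm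

variable {F K}

theorem Kbar_eq_glsResidual_transpose_mul_mul (hK : K.IsSymm)
    (hA : IsUnit (Fᵀ * K⁻¹ * F).det) :
    Kbar F K = (glsResidual F K)ᵀ * K⁻¹ * glsResidual F K :=
  sub_mul_inv_mul_eq_transpose_mul_mul F hK.inv hA

theorem dotProduct_Kbar_mulVec_pos (hK : K.PosDef) (hF : Function.Injective F.mulVec)
    {x : Fin n → ℝ} (hx : x ∉ LinearMap.range F.mulVecLin) :
    0 < x ⬝ᵥ (Kbar F K *ᵥ x) := by
  have hKsymm : K.IsSymm := isHermitian_iff_isSymm.mp hK.isHermitian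
  have hA : (Fᵀ * K⁻¹ * F).PosDef := by
    simpa [conjTranspose_eq_transpose_of_trivial] using hK.inv.conjTranspose_mul_mul_same hF
  have hAdet : IsUnit (Fᵀ * K⁻¹ * F).det := (isUnit_iff_isUnit_det _).mp hA.isUnit
  set N := glsResidual F K
  have hquad : x ⬝ᵥ (Kbar F K *ᵥ x) = N *ᵥ x ⬝ᵥ (K⁻¹ *ᵥ (N *ᵥ x)) := by
    rw [Kbar_eq_glsResidual_transpose_mul_mul hKsymm hAdet, ← mulVec_mulVec, ← mulVec_mulVec,
      dotProduct_mulVec, vecMul_transpose]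
  simpa [hquad] using hK.inv.dotProduct_mulVec_pos (glsResidual_mulVec_ne_zero F K hx)

end GLS

theorem stmt3_general (n p : ℕ)
    (F : Matrix (Fin n) (Fin p) ℝ) (hF : F.rank = p)
    (hH2 : ∀ i : Fin n, Pi.single i (1 : ℝ) ∉ LinearMap.range (Matrix.mulVecLin F))
    (K : Matrix (Fin n) (Fin n) ℝ) (hK : K.PosDef) :
    ∀ i : Fin n, 0 < Kbar F K i i := by
  intro i
  have hFinj : Function.Injective F.mulVec :=
    mulVec_injective_of_rank_eq_card_width (by rw [hF, Fintype.card_fin])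
  simpa [mulVec_single_one, single_dotProduct] using dotProduct_Kbar_mulVec_pos hK hFinj (hH2 i)

/-- Lemma 3: under Hypothesis H2 (no standard basis vector lies in `Im F`),
all diagonal entries of `K̄` are strictly positive. -/
theorem stmt3 (n p : ℕ) (hp : 0 < p) (hpn : p < n)
    (F : Matrix (Fin n) (Fin p) ℝ) (hF : F.rank = p)
    (hH2 : ∀ i : Fin n, Pi.single i (1 : ℝ) ∉ LinearMap.range (Matrix.mulVecLin F))
    (K : Matrix (Fin n) (Fin n) ℝ) (hK : K.PosDef) :
    ∀ i : Fin n, 0 < Kbar F K i i :=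
  stmt3_general n p F hF hH2 K hK
end

section
/- (Existence of a coverage-matching amplitude, upper-quantile case.) Assume Hypothesis H2, σ_ε² > 0, a ∈ (1/2, 1), q > 0, and 0 < δ < q. Set k_ε = Card{ i ∈ {1,…,n} : (Πy)ᵢ/√(Πᵢᵢ) ≤ σ_ε q }. If k_ε < na, then there exists σ² ∈ (0,∞) such that ψ⁺_δ(σ²) = a. -/
open Matrix

/-- `h⁺_δ(x) = 1` if `x > δ`, `x/δ` if `0 < x ≤ δ`, `0` if `x ≤ 0`. -/
noncomputable def hplus (δ x : ℝ) : ℝ :=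
  if δ < x then 1 else if 0 < x then x / δ else 0

/-- `ψ⁺_δ(K) = (1/n) Σᵢ h⁺_δ(q − (K̄y)ᵢ/√(K̄ᵢᵢ))`. -/
noncomputable def psiPlus {n p : ℕ} (F : Matrix (Fin n) (Fin p) ℝ)
    (y : Fin n → ℝ) (δ q : ℝ) (K : Matrix (Fin n) (Fin n) ℝ) : ℝ :=
  (1 / n) * ∑ i, hplus δ (q - (Kbar F K *ᵥ y) i / Real.sqrt (Kbar F K i i))

/-!
At `σ² = 0` we have `K̄ = σ_ε⁻² Π`, so the standardized residuals are `(Πy)ᵢ / (σ_ε √Πᵢᵢ)`; each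
index not counted by `k_ε` contributes `0` to `ψ⁺_δ(0)`, hence `ψ⁺_δ(0) ≤ k_ε / n < a`.
Since `K̄(cK) = c⁻¹ K̄(K)`, the residuals at `K(s) = s (R + (σ_ε² / s) I)` are `s^(-1/2)` times
residuals converging to those of `R` (continuity of `K̄` at the positive definite `R`, whose
diagonal is positive by H2), so they tend to `0` and `ψ⁺_δ(s) = 1` for large `s`. As `ψ⁺_δ` is
continuous on `[0, ∞)`, the intermediate value theorem produces the amplitude.
-/

open Filter Topology

section Matrices

variable {ι κ ν 𝕜 : Type*}

theorem Matrix.inv_smul₀ [Fintype ι] [DecidableEq ι] [Field 𝕜] (c : 𝕜) (A : Matrix ι ι 𝕜) :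
    (c • A)⁻¹ = c⁻¹ • A⁻¹ := by
  rcases eq_or_ne c 0 with rfl | hc
  · simp
  by_cases hA : IsUnit A.det
  · exact inv_smul' A (Units.mk0 c hc) hA
  · have hcA : ¬IsUnit (c • A).det := by
      rwa [det_smul, IsUnit.mul_iff, not_and_or, or_iff_right (by simp [hc])]
    rw [nonsing_inv_apply_not_isUnit _ hA, nonsing_inv_apply_not_isUnit _ hcA, smul_zero]

theorem Matrix.mulVec_injective_of_rank_eq_card_s11 [Fintype κ] [Field 𝕜] {A : Matrix ν κ 𝕜}
    (hA : A.rank = Fintype.card κ) : Function.Injective A.mulVec := by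
  have h := A.mulVecLin.finrank_range_add_finrank_ker
  rw [show Module.finrank 𝕜 (LinearMap.range A.mulVecLin) = _ from hA,
    Module.finrank_fintype_fun_eq_card, add_eq_left, Submodule.finrank_eq_zero] at h
  exact LinearMap.ker_eq_bot.mp h

variable {X : Type*} [TopologicalSpace X] [TopologicalSpace 𝕜]

theorem ContinuousAt.matrix_mul [Fintype κ] [Mul 𝕜] [AddCommMonoid 𝕜] [ContinuousAdd 𝕜]
    [ContinuousMul 𝕜] {A : X → Matrix ν κ 𝕜} {B : X → Matrix κ ι 𝕜} {x : X}
    (hA : ContinuousAt A x) (hB : ContinuousAt B x) : ContinuousAt (fun x => A x * B x) x :=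
  (continuous_fst.matrix_mul continuous_snd).continuousAt.comp (hA.prodMk hB)

theorem continuousAt_matrix_inv_of_det_ne_zero [Fintype ι] [DecidableEq ι] [Field 𝕜]
    [IsTopologicalDivisionRing 𝕜] {A : Matrix ι ι 𝕜} (hA : A.det ≠ 0) : ContinuousAt Inv.inv A :=
  continuousAt_matrix_inv A (by rw [Ring.inverse_eq_inv']; exact continuousAt_inv₀ hA)

end Matrices

section Kbar

variable {n p : ℕ} {F : Matrix (Fin n) (Fin p) ℝ} {K : Matrix (Fin n) (Fin n) ℝ}

theorem posDef_transpose_mul_inv_mul (hF : F.rank = p) (hK : K.PosDef) :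
    (Fᵀ * K⁻¹ * F).PosDef := by
  simpa only [conjTranspose_eq_transpose_of_trivial] using
    hK.inv.conjTranspose_mul_mul_same (mulVec_injective_of_rank_eq_card_s11 (by simpa using hF))

theorem Kbar_mul (hM : IsUnit (Fᵀ * K⁻¹ * F).det) : Kbar F K * F = 0 := by
  rw [Kbar, Matrix.sub_mul, show K⁻¹ * F * (Fᵀ * K⁻¹ * F)⁻¹ * Fᵀ * K⁻¹ * F
    = K⁻¹ * F * ((Fᵀ * K⁻¹ * F)⁻¹ * (Fᵀ * K⁻¹ * F)) by simp only [Matrix.mul_assoc],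
    nonsing_inv_mul _ hM, Matrix.mul_one, sub_self]

theorem Kbar_transpose (hK : K.IsSymm) : (Kbar F K)ᵀ = Kbar F K := by
  simp only [Kbar, transpose_sub, transpose_mul, transpose_nonsing_inv, transpose_transpose,
    hK.eq, Matrix.mul_assoc]

theorem mul_Kbar (hK : IsUnit K.det) :
    K * Kbar F K = 1 - F * (Fᵀ * K⁻¹ * F)⁻¹ * Fᵀ * K⁻¹ := by
  simp only [Kbar, Matrix.mul_sub, ← Matrix.mul_assoc, mul_nonsing_inv _ hK, Matrix.one_mul]

theorem Kbar_mul_mul_Kbar (hK : IsUnit K.det) (hM : IsUnit (Fᵀ * K⁻¹ * F).det) :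
    Kbar F K * K * Kbar F K = Kbar F K := by
  rw [Matrix.mul_assoc, mul_Kbar hK]
  simp only [Matrix.mul_sub, Matrix.mul_one, ← Matrix.mul_assoc, Kbar_mul hM, Matrix.zero_mul,
    sub_zero]

theorem mem_range_of_Kbar_mulVec_eq_zero (hK : IsUnit K.det) {x : Fin n → ℝ}
    (hx : Kbar F K *ᵥ x = 0) : x ∈ LinearMap.range F.mulVecLin := by
  have hKx := congrArg (K *ᵥ ·) hx
  simp only [mulVec_mulVec, mul_Kbar hK, sub_mulVec, one_mulVec, mulVec_zero, sub_eq_zero] at hKx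
  exact ⟨((Fᵀ * K⁻¹ * F)⁻¹ * Fᵀ * K⁻¹) *ᵥ x, by
    rw [mulVecLin_apply, mulVec_mulVec]; conv_rhs => rw [hKx]
    simp only [Matrix.mul_assoc]⟩

theorem Kbar_diag_pos (hF : F.rank = p) (hK : K.PosDef) {i : Fin n}
    (hi : Pi.single i 1 ∉ LinearMap.range F.mulVecLin) : 0 < Kbar F K i i := by
  have hKdet : IsUnit K.det := hK.det_pos.ne'.isUnit
  set v := Kbar F K *ᵥ Pi.single i 1
  have hv : v ≠ 0 := fun h => hi (mem_range_of_Kbar_mulVec_eq_zero hKdet h)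
  -- `K̄ K K̄ = K̄` and the symmetry of `K̄` make `K̄ᵢᵢ` the `K`-norm of the `i`-th column of `K̄`.
  have hdiag : Kbar F K i i = v ⬝ᵥ (K *ᵥ v) := by
    have hM := (posDef_transpose_mul_inv_mul hF hK).det_pos.ne'.isUnit
    have hv' : Pi.single i 1 ᵥ* Kbar F K = v := by
      rw [← Kbar_transpose (isHermitian_iff_isSymm.mp hK.isHermitian), vecMul_transpose]
    calc Kbar F K i i = Pi.single i 1 ⬝ᵥ ((Kbar F K * K * Kbar F K) *ᵥ Pi.single i 1) := by
          rw [Kbar_mul_mul_Kbar hKdet hM]; simp [mulVec_single]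
      _ = (Pi.single i 1 ᵥ* Kbar F K) ⬝ᵥ (K *ᵥ v) := by
          rw [← mulVec_mulVec, ← mulVec_mulVec, dotProduct_mulVec]
      _ = v ⬝ᵥ (K *ᵥ v) := by rw [hv']
  simpa only [hdiag, star_trivial] using hK.dotProduct_mulVec_pos hv

theorem Kbar_smul (c : ℝ) : Kbar F (c • K) = c⁻¹ • Kbar F K := by
  rcases eq_or_ne c 0 with rfl | hc
  · simp [Kbar]
  simp only [Kbar, inv_smul₀, Matrix.mul_smul, Matrix.smul_mul, smul_smul, smul_sub, inv_inv,
    inv_mul_cancel_left₀ hc]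

theorem Kbar_one : Kbar F 1 = 1 - F * (Fᵀ * F)⁻¹ * Fᵀ := by
  simp only [Kbar, inv_one, Matrix.mul_one, Matrix.one_mul]

theorem continuousAt_Kbar (hK : K.det ≠ 0) (hM : (Fᵀ * K⁻¹ * F).det ≠ 0) :
    ContinuousAt (Kbar F) K := by
  have hinv : ContinuousAt Inv.inv K := continuousAt_matrix_inv_of_det_ne_zero hK
  have hM' : ContinuousAt (fun A => Fᵀ * A⁻¹ * F) K :=
    (continuousAt_const.matrix_mul hinv).matrix_mul continuousAt_const
  have hMinv : ContinuousAt (fun A => (Fᵀ * A⁻¹ * F)⁻¹) K :=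
    (continuousAt_matrix_inv_of_det_ne_zero hM).comp_of_eq hM' rfl
  exact hinv.sub ((((hinv.matrix_mul continuousAt_const).matrix_mul hMinv).matrix_mul
    continuousAt_const).matrix_mul hinv)

end Kbar

section StdResidual

variable {n p : ℕ} {F : Matrix (Fin n) (Fin p) ℝ} {K : Matrix (Fin n) (Fin n) ℝ}
  {y : Fin n → ℝ} {i : Fin n}

noncomputable def stdResidual (F : Matrix (Fin n) (Fin p) ℝ) (K : Matrix (Fin n) (Fin n) ℝ)
    (y : Fin n → ℝ) (i : Fin n) : ℝ :=
  (Kbar F K *ᵥ y) i / √(Kbar F K i i)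

theorem stdResidual_smul {c : ℝ} (hc : 0 ≤ c) :
    stdResidual F (c • K) y i = (√c)⁻¹ * stdResidual F K y i := by
  simp only [stdResidual, Kbar_smul, smul_mulVec, Pi.smul_apply, Matrix.smul_apply, smul_eq_mul,
    Real.sqrt_mul (inv_nonneg.2 hc), Real.sqrt_inv, mul_div_mul_comm, inv_div_inv,
    Real.sqrt_div_self]

theorem stdResidual_sq_smul_one {σ : ℝ} (hσ : 0 < σ) :
    stdResidual F (σ ^ 2 • 1) y i =
      σ⁻¹ * (((1 - F * (Fᵀ * F)⁻¹ * Fᵀ) *ᵥ y) i /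
        √((1 - F * (Fᵀ * F)⁻¹ * Fᵀ : Matrix (Fin n) (Fin n) ℝ) i i)) := by
  rw [stdResidual_smul (by positivity), stdResidual, Kbar_one, Real.sqrt_sq hσ.le]

theorem continuousAt_stdResidual (hF : F.rank = p) (hK : K.PosDef)
    (hi : Pi.single i 1 ∉ LinearMap.range F.mulVecLin) :
    ContinuousAt (fun K => stdResidual F K y i) K := by
  have hKbar : ContinuousAt (Kbar F) K :=
    continuousAt_Kbar hK.det_pos.ne' (posDef_transpose_mul_inv_mul hF hK).det_pos.ne'
  have hratio : ContinuousAt (fun M : Matrix (Fin n) (Fin n) ℝ => (M *ᵥ y) i / √(M i i))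
      (Kbar F K) :=
    ContinuousAt.div (by fun_prop)
      (Real.continuous_sqrt.comp (continuous_id.matrix_elem i i)).continuousAt
      (Real.sqrt_pos.2 (Kbar_diag_pos hF hK hi)).ne'
  exact hratio.comp hKbar

theorem tendsto_stdResidual_smul_add_smul_one {R : Matrix (Fin n) (Fin n) ℝ} (hF : F.rank = p)
    (hR : R.PosDef) (hi : Pi.single i 1 ∉ LinearMap.range F.mulVecLin) (c : ℝ) :
    Tendsto (fun s : ℝ => stdResidual F (s • R + c • 1) y i) atTop (𝓝 0) := by
  have hcs : Tendsto (fun s : ℝ => c / s) atTop (𝓝 0) := tendsto_const_nhds.div_atTop tendsto_id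
  have hlim : Tendsto (fun s : ℝ => R + (c / s) • 1) atTop (𝓝 R) := by
    simpa using (tendsto_const_nhds (x := R)).add
      (hcs.smul_const (1 : Matrix (Fin n) (Fin n) ℝ))
  have hres := (continuousAt_stdResidual (y := y) hF hR hi).tendsto.comp hlim
  have hsqrt : Tendsto (fun s : ℝ => (√s)⁻¹) atTop (𝓝 0) :=
    tendsto_inv_atTop_zero.comp Real.tendsto_sqrt_atTop
  have hprod :
      Tendsto (fun s : ℝ => (√s)⁻¹ * stdResidual F (R + (c / s) • 1) y i) atTop (𝓝 0) := by
    simpa using hsqrt.mul hres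
  refine hprod.congr' ?_
  filter_upwards [eventually_gt_atTop 0] with s hs
  rw [← stdResidual_smul hs.le, smul_add, smul_smul, mul_div_cancel₀ _ hs.ne']

end StdResidual

section Coverage

variable {δ x : ℝ}

theorem continuous_hplus (hδ : 0 < δ) : Continuous (hplus δ) := by
  have hclamp : hplus δ = fun x => max 0 (min 1 (x / δ)) := by
    ext x
    unfold hplus
    split_ifs with h1 h2
    · rw [min_eq_left ((one_le_div hδ).2 h1.le), max_eq_right zero_le_one]
    · rw [min_eq_right ((div_le_one hδ).2 (not_lt.1 h1)), max_eq_right (by positivity)]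
    · exact (max_eq_left
        (min_le_of_right_le (div_nonpos_of_nonpos_of_nonneg (not_lt.1 h2) hδ.le))).symm
  rw [hclamp]
  fun_prop

theorem hplus_le_one : hplus δ x ≤ 1 := by
  unfold hplus
  split_ifs with h1 h2
  · exact le_rfl
  · exact div_le_one_of_le₀ (not_lt.1 h1) (h2.le.trans (not_lt.1 h1))
  · exact zero_le_one

theorem hplus_of_nonpos (hδ : 0 ≤ δ) (hx : x ≤ 0) : hplus δ x = 0 := by
  simp [hplus, hx.not_gt, (hx.trans hδ).not_gt]

theorem hplus_of_lt (hx : δ < x) : hplus δ x = 1 := if_pos hx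

variable {n p : ℕ} {F : Matrix (Fin n) (Fin p) ℝ} {K : Matrix (Fin n) (Fin n) ℝ}
  {y : Fin n → ℝ} {q : ℝ}

theorem psiPlus_eq_sum_div :
    psiPlus F y δ q K = (∑ i, hplus δ (q - stdResidual F K y i)) / n :=
  one_div_mul_eq_div _ _

theorem psiPlus_le_card_div (hδ : 0 ≤ δ) :
    psiPlus F y δ q K ≤ ((Finset.univ.filter fun i => stdResidual F K y i ≤ q).card : ℝ) / n := by
  rw [psiPlus_eq_sum_div, ← Finset.sum_boole]
  gcongr with i
  split_ifs with h
  · exact hplus_le_one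
  · exact (hplus_of_nonpos hδ (by linarith)).le

theorem psiPlus_eq_one (hn : n ≠ 0) (h : ∀ i, stdResidual F K y i < q - δ) :
    psiPlus F y δ q K = 1 := by
  rw [psiPlus_eq_sum_div, Finset.sum_congr rfl fun i _ => hplus_of_lt (by linarith [h i]),
    Finset.sum_const, Finset.card_univ, Fintype.card_fin, nsmul_one]
  exact div_self (Nat.cast_ne_zero.2 hn)

theorem continuousAt_psiPlus (hδ : 0 < δ) (hF : F.rank = p) (hK : K.PosDef)
    (hH2 : ∀ i : Fin n, Pi.single i 1 ∉ LinearMap.range F.mulVecLin) :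
    ContinuousAt (psiPlus F y δ q) K := by
  rw [show psiPlus F y δ q = fun K => (∑ i, hplus δ (q - stdResidual F K y i)) / n from
    funext fun _ => psiPlus_eq_sum_div]
  exact (tendsto_finsetSum _ fun i _ => (continuous_hplus hδ).continuousAt.comp
    (continuousAt_const.sub (continuousAt_stdResidual hF hK (hH2 i)))).div_const _

end Coverage

theorem stmt11_general (n p : ℕ)
    (F : Matrix (Fin n) (Fin p) ℝ) (hF : F.rank = p)
    (hH2 : ∀ i : Fin n, Pi.single i (1 : ℝ) ∉ LinearMap.range (Matrix.mulVecLin F))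
    (y : Fin n → ℝ) (R : Matrix (Fin n) (Fin n) ℝ) (hR : R.PosDef)
    (sigeps : ℝ) (hsig : 0 < sigeps)
    (a : ℝ) (ha : a ∈ Set.Ioo (1 / 2 : ℝ) 1)
    (q : ℝ) (δ : ℝ) (hδ : 0 < δ) (hδq : δ < q)
    (hke : ((Finset.univ.filter fun i : Fin n =>
        (((1 : Matrix (Fin n) (Fin n) ℝ) - F * (Fᵀ * F)⁻¹ * Fᵀ) *ᵥ y) i /
          Real.sqrt (((1 : Matrix (Fin n) (Fin n) ℝ) - F * (Fᵀ * F)⁻¹ * Fᵀ) i i)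
          ≤ sigeps * q).card : ℝ) < n * a) :
    ∃ s : ℝ, 0 < s ∧
      psiPlus F y δ q (s • R + (sigeps ^ 2) • (1 : Matrix (Fin n) (Fin n) ℝ)) = a := by
  have hn : n ≠ 0 := by rintro rfl; simp at hke
  set ψ := fun s : ℝ => psiPlus F y δ q (s • R + sigeps ^ 2 • 1)
  have hK : ∀ s : ℝ, 0 ≤ s → (s • R + sigeps ^ 2 • (1 : Matrix (Fin n) (Fin n) ℝ)).PosDef :=
    fun s hs => .posSemidef_add (hR.posSemidef.smul hs) (PosDef.one.smul (by positivity))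
  have hψ : ContinuousOn ψ (Set.Ici 0) := fun s hs =>
    (ContinuousAt.comp (f := fun s : ℝ => s • R + sigeps ^ 2 • 1)
      (continuousAt_psiPlus hδ hF (hK s hs) hH2) (by fun_prop)).continuousWithinAt
  have hψ0 : ψ 0 < a := by
    refine (psiPlus_le_card_div hδ.le).trans_lt ?_
    simp only [zero_smul, zero_add, stdResidual_sq_smul_one hsig, inv_mul_le_iff₀ hsig]
    rwa [div_lt_iff₀' (by positivity)]
  obtain ⟨S, hS, hψS⟩ : ∃ S > 0, ψ S = 1 :=
    ((eventually_gt_atTop 0).and (eventually_all.2 fun i =>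
      (tendsto_stdResidual_smul_add_smul_one hF hR (hH2 i) _).eventually_lt_const
        (sub_pos.2 hδq))).exists.imp fun S hS => ⟨hS.1, psiPlus_eq_one hn hS.2⟩
  obtain ⟨s, hs, hψs⟩ :=
    intermediate_value_Ioc hS.le (hψ.mono Set.Icc_subset_Ici_self) ⟨hψ0, hψS ▸ ha.2.le⟩
  exact ⟨s, hs.1, hψs⟩

/-- Existence of a coverage-matching amplitude (upper-quantile case):
if `k_ε = #{i : (Πy)ᵢ/√(Πᵢᵢ) ≤ σ_ε q} < na`, then `ψ⁺_δ(σ²) = a` for some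
`σ² > 0`, where `K(σ²) = σ²R + σ_ε²Iₙ`. -/
theorem stmt11 (n p : ℕ) (hp : 0 < p) (hpn : p < n)
    (F : Matrix (Fin n) (Fin p) ℝ) (hF : F.rank = p)
    (hH2 : ∀ i : Fin n, Pi.single i (1 : ℝ) ∉ LinearMap.range (Matrix.mulVecLin F))
    (y : Fin n → ℝ) (R : Matrix (Fin n) (Fin n) ℝ) (hR : R.PosDef)
    (sigeps : ℝ) (hsig : 0 < sigeps)
    (a : ℝ) (ha : a ∈ Set.Ioo (1 / 2 : ℝ) 1)
    (q : ℝ) (hq : 0 < q) (δ : ℝ) (hδ : 0 < δ) (hδq : δ < q)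
    (hke : ((Finset.univ.filter fun i : Fin n =>
        (((1 : Matrix (Fin n) (Fin n) ℝ) - F * (Fᵀ * F)⁻¹ * Fᵀ) *ᵥ y) i /
          Real.sqrt (((1 : Matrix (Fin n) (Fin n) ℝ) - F * (Fᵀ * F)⁻¹ * Fᵀ) i i)
          ≤ sigeps * q).card : ℝ) < n * a) :
    ∃ s : ℝ, 0 < s ∧
      psiPlus F y δ q (s • R + (sigeps ^ 2) • (1 : Matrix (Fin n) (Fin n) ℝ)) = a :=
  stmt11_general n p F hF hH2 y R hR sigeps hsig a ha q δ hδ hδq hke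
end

section
/- Let W be a real n×(n−p) matrix with WᵀW = I_{n−p} and FᵀW = 0, and let D₁ be a real symmetric n×n matrix such that WᵀD₁W is positive definite. Set A = W(WᵀD₁W)⁻¹Wᵀ. Then A is symmetric positive semidefinite with Ker A = Im F, and under Hypothesis H2 every diagonal entry of A is strictly positive: Aᵢᵢ > 0 for all i = 1,…,n. -/
open Matrix

open scoped ComplexOrder

/-! `A = W (WᵀD₁W)⁻¹ Wᵀ` is a congruence `B M Bᴴ` with `B = W` and `M = (WᵀD₁W)⁻¹` positive
definite, so `A` is positive semidefinite and `xᵀAx = 0` exactly when `Wᵀx = 0`; hence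
`Ker A = Ker Wᵀ`. Since `FᵀW = 0`, `Im F ⊆ Ker Wᵀ`, and both have dimension `p` because
`WᵀW = I` forces `rank Wᵀ = n - p`. Finally a diagonal entry `Aᵢᵢ = eᵢᵀAeᵢ` of a positive
semidefinite matrix vanishes only if `Aeᵢ = 0`, which H2 rules out. -/

namespace Matrix

variable {m n o : Type*} [Fintype n]

section Field

variable {K : Type*} [Field K]

theorem rank_eq_card_height_of_mul_eq_one [Fintype m] [DecidableEq m] {A : Matrix m n K}
    {B : Matrix n m K} (h : A * B = 1) : A.rank = Fintype.card m :=
  le_antisymm A.rank_le_card_height (by simpa [h, rank_one] using rank_mul_le_left A B)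

theorem ker_mulVecLin_eq_range_of_mul_eq_zero [Fintype o] {B : Matrix m n K} {F : Matrix n o K}
    (hBF : B * F = 0) (hrank : B.rank + F.rank = Fintype.card n) :
    LinearMap.ker B.mulVecLin = LinearMap.range F.mulVecLin := by
  have hle : LinearMap.range F.mulVecLin ≤ LinearMap.ker B.mulVecLin := by
    rintro _ ⟨y, rfl⟩
    simp [mulVec_mulVec, hBF]
  refine (Submodule.eq_of_le_of_finrank_le hle ?_).symm
  have hdim := LinearMap.finrank_range_add_finrank_ker B.mulVecLin
  rw [Module.finrank_fintype_fun_eq_card] at hdim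
  change B.rank + _ = _ at hdim
  change _ ≤ F.rank
  omega

end Field

variable {𝕜 : Type*} [RCLike 𝕜]

theorem PosDef.ker_mulVecLin_mul_mul_conjTranspose [Fintype m] {M : Matrix n n 𝕜} (hM : M.PosDef)
    (B : Matrix m n 𝕜) : LinearMap.ker (B * M * Bᴴ).mulVecLin = LinearMap.ker Bᴴ.mulVecLin := by
  ext x
  have hquad : star x ⬝ᵥ (B * M * Bᴴ) *ᵥ x = star (Bᴴ *ᵥ x) ⬝ᵥ M *ᵥ (Bᴴ *ᵥ x) := by
    rw [star_mulVec, conjTranspose_conjTranspose, ← mulVec_mulVec, ← mulVec_mulVec,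
      dotProduct_mulVec, dotProduct_mulVec, vecMul_vecMul]
  simp only [LinearMap.mem_ker, mulVecLin_apply,
    ← (hM.posSemidef.mul_mul_conjTranspose_same B).dotProduct_mulVec_zero_iff, hquad]
  exact ⟨fun h => by_contra fun hx => (hM.dotProduct_mulVec_pos hx).ne' h,
    fun h => by simp [h]⟩

theorem PosSemidef.diag_pos_of_mulVec_single_ne_zero [DecidableEq n] {A : Matrix n n 𝕜}
    (hA : A.PosSemidef) {i : n} (hi : A *ᵥ Pi.single i 1 ≠ 0) : 0 < A i i := by
  have hdiag : star (Pi.single i 1) ⬝ᵥ A *ᵥ Pi.single i 1 = A i i := by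
    simp [single_dotProduct]
  rw [← hdiag]
  exact lt_of_le_of_ne (hA.dotProduct_mulVec_nonneg _)
    (fun h => hi ((hA.dotProduct_mulVec_zero_iff _).1 h.symm))

end Matrix

theorem stmt17_general (n p : ℕ)
    (F : Matrix (Fin n) (Fin p) ℝ) (hF : F.rank = p)
    (W : Matrix (Fin n) (Fin (n - p)) ℝ)
    (hW1 : Wᵀ * W = 1) (hW2 : Fᵀ * W = 0)
    (D1 : Matrix (Fin n) (Fin n) ℝ)
    (hPD : (Wᵀ * D1 * W).PosDef)
    (hH2 : ∀ i : Fin n, Pi.single i (1 : ℝ) ∉ LinearMap.range (Matrix.mulVecLin F)) :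
    (W * (Wᵀ * D1 * W)⁻¹ * Wᵀ).PosSemidef ∧
    LinearMap.ker (Matrix.mulVecLin (W * (Wᵀ * D1 * W)⁻¹ * Wᵀ))
      = LinearMap.range (Matrix.mulVecLin F) ∧
    ∀ i : Fin n, 0 < (W * (Wᵀ * D1 * W)⁻¹ * Wᵀ) i i := by
  have hA : W * (Wᵀ * D1 * W)⁻¹ * Wᵀ = W * (Wᵀ * D1 * W)⁻¹ * Wᴴ := by
    rw [conjTranspose_eq_transpose_of_trivial]
  have hPSD := hA ▸ hPD.inv.posSemidef.mul_mul_conjTranspose_same W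
  have hp : p ≤ n := by simpa [hF] using F.rank_le_card_height
  have hker :
      LinearMap.ker (W * (Wᵀ * D1 * W)⁻¹ * Wᵀ).mulVecLin = LinearMap.range F.mulVecLin := by
    rw [hA, hPD.inv.ker_mulVecLin_mul_mul_conjTranspose, conjTranspose_eq_transpose_of_trivial]
    refine ker_mulVecLin_eq_range_of_mul_eq_zero (by simpa using congrArg transpose hW2) ?_
    rw [rank_eq_card_height_of_mul_eq_one hW1, hF, Fintype.card_fin, Fintype.card_fin]
    omega
  exact ⟨hPSD, hker, fun i => hPSD.diag_pos_of_mulVec_single_ne_zero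
    fun h => hH2 i (hker ▸ LinearMap.mem_ker.2 h)⟩

/-- Lemma 7 (and surroundings): `A = W(WᵀD₁W)⁻¹Wᵀ` is symmetric positive
semidefinite with `Ker A = Im F`, and under Hypothesis H2 all its diagonal
entries are strictly positive. -/
theorem stmt17 (n p : ℕ) (hp : 0 < p) (hpn : p < n)
    (F : Matrix (Fin n) (Fin p) ℝ) (hF : F.rank = p)
    (W : Matrix (Fin n) (Fin (n - p)) ℝ)
    (hW1 : Wᵀ * W = 1) (hW2 : Fᵀ * W = 0)
    (D1 : Matrix (Fin n) (Fin n) ℝ) (hD1 : D1.IsSymm)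
    (hPD : (Wᵀ * D1 * W).PosDef)
    (hH2 : ∀ i : Fin n, Pi.single i (1 : ℝ) ∉ LinearMap.range (Matrix.mulVecLin F)) :
    (W * (Wᵀ * D1 * W)⁻¹ * Wᵀ).PosSemidef ∧
    LinearMap.ker (Matrix.mulVecLin (W * (Wᵀ * D1 * W)⁻¹ * Wᵀ))
      = LinearMap.range (Matrix.mulVecLin F) ∧
    ∀ i : Fin n, 0 < (W * (Wᵀ * D1 * W)⁻¹ * Wᵀ) i i :=
  stmt17_general n p F hF W hW1 hW2 D1 hPD hH2
end
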